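/- If F : F_{2^n} → F_{2^n} is an o-polynomial, then for every b ∈ F_{2^n}, Σ_{v ∈ F_{2^n}} W_F(bv, v)^2 = 2^n · Σ_{γ ∈ F_{2^n}} |{z ∈ F_{2^n} : F(z+γ) + F(γ) + bz = 0}|, and for every nonzero b this equals 2^{2n+1}, since each inner set has exactly 2 elements. -/

import Mathlib

/-!
Squaring the Walsh transform and summing over `v`, orthogonality of the primitive character
`x ↦ (-1) ^ tr x` collapses `∑ v, W_F(b v, v) ^ 2` to `2 ^ n` times the number of pairs `(x, y)`
with `F x + b x = F y + b y`. For an o-polynomial and `b ≠ 0`, every value of `x ↦ F x + b x` that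
is attained is attained exactly twice, so each `y` contributes `2`.
-/

open scoped Classical
open Finset

noncomputable instance (n : ℕ) : Fintype (GaloisField 2 n) := Fintype.ofFinite _

/-- The absolute trace from `GF(2^n)` to `GF(2)`. -/
noncomputable def tr (n : ℕ) (x : GaloisField 2 n) : ZMod 2 :=
  Algebra.trace (ZMod 2) (GaloisField 2 n) x

/-- The Walsh transform of `F` at `(u, v)`. -/
noncomputable def W (n : ℕ) (F : GaloisField 2 n → GaloisField 2 n)
    (u v : GaloisField 2 n) : ℤ :=
  ∑ x : GaloisField 2 n, (-1 : ℤ) ^ (tr n (v * F x) + tr n (u * x)).val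

/-- `F` is an o-polynomial: for every nonzero `b` and every `a`, the equation
`F x + b * x = a` has 0 or 2 solutions. -/
def IsOPoly (n : ℕ) (F : GaloisField 2 n → GaloisField 2 n) : Prop :=
  ∀ b : GaloisField 2 n, b ≠ 0 → ∀ a : GaloisField 2 n,
    Nat.card {x : GaloisField 2 n // F x + b * x = a} = 0 ∨
    Nat.card {x : GaloisField 2 n // F x + b * x = a} = 2

def signChar : AddChar (ZMod 2) ℤ where
  toFun a := (-1) ^ a.val
  map_zero_eq_one' := rfl
  map_add_eq_mul' := by decide

theorem signChar_eq_one_iff {a : ZMod 2} : signChar a = 1 ↔ a = 0 := by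
  revert a; decide

section TraceChar

variable (L : Type*) [Field L] [Algebra (ZMod 2) L]

noncomputable def traceChar : AddChar L ℤ :=
  signChar.compAddMonoidHom (Algebra.trace (ZMod 2) L).toAddMonoidHom

theorem traceChar_apply (x : L) : traceChar L x = signChar (Algebra.trace (ZMod 2) L x) := rfl

theorem isPrimitive_traceChar [Finite L] : (traceChar L).IsPrimitive := by
  refine AddChar.IsPrimitive.of_ne_one fun h ↦ one_ne_zero <|
    (traceForm_nondegenerate (ZMod 2) L).1 1 fun y ↦ ?_
  simpa [traceChar_apply, signChar_eq_one_iff] using DFunLike.congr_fun h y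

end TraceChar

section PrimitiveChar

variable {R R' : Type*} [CommRing R] [Fintype R] [DecidableEq R] [CommRing R'] [IsDomain R']
  {ψ : AddChar R R'}

theorem sum_sq_sum_addChar_mul (hψ : ψ.IsPrimitive) (f : R → R) :
    ∑ v, (∑ x, ψ (v * f x)) ^ 2 = Fintype.card R * ∑ γ, (#{z | f (z + γ) + f γ = 0} : R') := by
  calc ∑ v, (∑ x, ψ (v * f x)) ^ 2
      = ∑ γ, ∑ z, ∑ v, ψ (v * (f (z + γ) + f γ)) := by
        simp_rw [sq, sum_mul_sum, ← AddChar.map_add_eq_mul, ← mul_add]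
        rw [sum_comm]
        refine sum_congr rfl fun γ _ ↦ ?_
        rw [sum_comm, ← Equiv.sum_comp (Equiv.addRight γ)]
        simp only [Equiv.coe_addRight, add_comm (f γ)]
    _ = ∑ γ, ∑ z, if f (z + γ) + f γ = 0 then (Fintype.card R : R') else 0 := by
        simp_rw [AddChar.sum_mulShift _ hψ, Nat.cast_ite, Nat.cast_zero]
    _ = Fintype.card R * ∑ γ, (#{z | f (z + γ) + f γ = 0} : R') := by
        simp_rw [sum_ite, sum_const_zero, add_zero, sum_const, nsmul_eq_mul, mul_sum, mul_comm]

end PrimitiveChar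

theorem W_mul_eq_sum_traceChar (n : ℕ) (F : GaloisField 2 n → GaloisField 2 n)
    (b v : GaloisField 2 n) : W n F (b * v) v = ∑ x, traceChar _ (v * (F x + b * x)) := by
  refine sum_congr rfl fun x _ ↦ ?_
  rw [traceChar_apply, show v * (F x + b * x) = v * F x + b * v * x by ring, map_add]
  rfl

theorem IsOPoly.card_shift_eq_two {n : ℕ} {F : GaloisField 2 n → GaloisField 2 n}
    (hF : IsOPoly n F) {b : GaloisField 2 n} (hb : b ≠ 0) (γ : GaloisField 2 n) :
    Nat.card {z : GaloisField 2 n // F (z + γ) + F γ + b * z = 0} = 2 := by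
  have h2 : (2 : GaloisField 2 n) = 0 := CharTwo.two_eq_zero
  have e : {z // F (z + γ) + F γ + b * z = 0} ≃ {x // F x + b * x = F γ + b * γ} :=
    (Equiv.addRight γ).subtypeEquiv fun z ↦ by
      simp only [Equiv.coe_addRight]
      constructor <;> intro h
      · linear_combination h - F γ * h2
      · linear_combination h + F γ * h2
  have : Nonempty {x // F x + b * x = F γ + b * γ} := ⟨⟨γ, rfl⟩⟩
  rw [Nat.card_congr e]
  exact (hF b hb _).resolve_left Nat.card_pos.ne'

theorem o_polynomial_square_walsh_sums (n : ℕ) (hn : 0 < n)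
    (F : GaloisField 2 n → GaloisField 2 n) (hF : IsOPoly n F) :
    (∀ b : GaloisField 2 n,
      ∑ v : GaloisField 2 n, W n F (b * v) v ^ 2 =
        2 ^ n * ∑ γ : GaloisField 2 n,
          (Nat.card {z : GaloisField 2 n // F (z + γ) + F γ + b * z = 0} : ℤ)) ∧
    (∀ b : GaloisField 2 n, b ≠ 0 → ∀ γ : GaloisField 2 n,
      Nat.card {z : GaloisField 2 n // F (z + γ) + F γ + b * z = 0} = 2) ∧
    (∀ b : GaloisField 2 n, b ≠ 0 →
      ∑ v : GaloisField 2 n, W n F (b * v) v ^ 2 = 2 ^ (2 * n + 1)) := by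
  have hcard : Fintype.card (GaloisField 2 n) = 2 ^ n := by
    rw [← Nat.card_eq_fintype_card, GaloisField.card 2 n hn.ne']
  have hA : ∀ b : GaloisField 2 n, ∑ v, W n F (b * v) v ^ 2 =
      2 ^ n * ∑ γ, (Nat.card {z // F (z + γ) + F γ + b * z = 0} : ℤ) := fun b ↦ by
    have hshift (z γ : GaloisField 2 n) :
        F (z + γ) + b * (z + γ) + (F γ + b * γ) = F (z + γ) + F γ + b * z := by
      linear_combination b * γ * (CharTwo.two_eq_zero : (2 : GaloisField 2 n) = 0)
    simp_rw [W_mul_eq_sum_traceChar, sum_sq_sum_addChar_mul (isPrimitive_traceChar _), hshift,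
      hcard, Nat.card_eq_fintype_card, Fintype.card_subtype]
    push_cast
    rfl
  have hB : ∀ b : GaloisField 2 n, b ≠ 0 → ∀ γ,
      Nat.card {z // F (z + γ) + F γ + b * z = 0} = 2 := fun _ hb ↦ hF.card_shift_eq_two hb
  refine ⟨hA, hB, fun b hb ↦ ?_⟩
  simp_rw [hA, hB b hb, sum_const, card_univ, hcard]
  push_cast
  ring
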